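/- arXiv:0711.4759 — 4 statements merged into one kernel-verified Lean document; each statement's English description precedes it below -/
import Mathlib

section
/- For each positive integer n and each rational α with 0 ≤ α ≤ 1, there exists an election Pad_n = (C,V) with exactly 2n+1 candidates such that every candidate c ∈ C has Copeland^α score exactly n. -/
/-- A voter's preference: a strict linear order over candidates `C`,
represented by a Boolean relation `pref` (`pref a b` = voter strictly prefers `a` to `b`). -/
structure Vote (C : Type) where
  pref : C → C → Bool
  asymm : ∀ a b : C, a ≠ b → pref a b = !pref b a
  irrefl : ∀ a : C, pref a a = false
  trans : ∀ a b c : C, pref a b = true → pref b c = true → pref a c = true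

/-- Number of voters in `V` preferring `c` to `d`. -/
def countPref {C : Type} (V : List (Vote C)) (c d : C) : ℕ :=
  V.countP (fun v => v.pref c d)

/-- Copeland^α points `c` obtains from the head-to-head contest with `d`:
`1` for a strict-majority win, `α` for a tie, `0` for a loss. -/
def points {C : Type} (α : ℚ) (V : List (Vote C)) (c d : C) : ℚ :=
  if countPref V d c < countPref V c d then 1
  else if countPref V c d = countPref V d c then α
  else 0

/-- Copeland^α score of `c` within candidate set `S`. -/
def score {C : Type} [DecidableEq C] (α : ℚ) (S : Finset C) (V : List (Vote C)) (c : C) : ℚ :=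
  ∑ d ∈ S.erase c, points α V c d

/-- `p` is a Copeland^α winner of the election with candidate set `S` and voters `V`. -/
def IsWinner {C : Type} [DecidableEq C] (α : ℚ) (S : Finset C) (V : List (Vote C)) (p : C) : Prop :=
  p ∈ S ∧ ∀ c ∈ S, score α S V c ≤ score α S V p

/-! Let `m = 2n + 1` and take as voters the `m` cyclic shifts of the order `0 < 1 < ⋯ < 2n`.
Exactly `m - t` of them prefer `c` to `d`, where `t ∈ [1, m)` is the residue of `d - c` mod `m`,
so `c` beats `d` iff `t ≤ n`. With an odd number of voters there are no ties, and every
candidate beats exactly the `n` candidates `c + 1, …, c + n`. -/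

open Finset Function

def Vote.ofInjective {C : Type} (f : C → ℕ) (hf : Injective f) : Vote C where
  pref a b := decide (f a < f b)
  asymm a b hab := by
    have := hf.ne hab
    by_cases h : f a < f b <;> simp [h] <;> omega
  irrefl a := by simp
  trans a b c := by simp only [decide_eq_true_eq]; exact lt_trans

lemma countPref_add_countPref {C : Type} (V : List (Vote C)) {c d : C} (hcd : c ≠ d) :
    countPref V c d + countPref V d c = V.length := by
  rw [List.length_eq_countP_add_countP (fun v => v.pref c d), countPref, countPref]
  congr 1
  exact List.countP_congr fun v _ => by simp [v.asymm d c hcd.symm]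

lemma points_eq_ite_of_odd {C : Type} (α : ℚ) (V : List (Vote C)) {c d : C} (hcd : c ≠ d)
    (hV : Odd V.length) : points α V c d = if V.length < 2 * countPref V c d then 1 else 0 := by
  have hsum := countPref_add_countPref V hcd
  obtain ⟨k, hk⟩ := hV
  unfold points
  split_ifs <;> first | rfl | omega

lemma countPref_map_finRange {C : Type} {m : ℕ} (v : Fin m → Vote C) (c d : C) :
    countPref ((List.finRange m).map v) c d = #{j | (v j).pref c d} := by
  rw [countPref, List.countP_map, card_def, filter_val, ← Multiset.countP_eq_card_filter,
    Fin.univ_def]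
  simp only [Multiset.coe_countP, Bool.decide_eq_true]
  rfl

section Cyclic

variable {m : ℕ} [NeZero m]

def cyclicVote (j : Fin m) : Vote (Fin m) :=
  Vote.ofInjective (fun a => (a - j).val) (Fin.val_injective.comp sub_left_injective)

def cyclicProfile (m : ℕ) [NeZero m] : List (Vote (Fin m)) :=
  (List.finRange m).map cyclicVote

lemma length_cyclicProfile : (cyclicProfile m).length = m := by
  simp [cyclicProfile]

lemma card_filter_val_lt_val_add {t : Fin m} (ht : t ≠ 0) :
    #{x : Fin m | x.val < (x + t).val} = m - t.val := by
  have ht' : t.val ≠ 0 := Fin.val_ne_iff.mpr ht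
  have hx : ∀ x : Fin m, x.val < (x + t).val ↔ x.val < m - t.val := fun x => by
    have := x.isLt
    rw [Fin.val_add_eq_ite]
    split_ifs <;> omega
  simp only [hx, Fin.card_filter_val_lt]
  omega

lemma countPref_cyclicProfile {c d : Fin m} (hcd : c ≠ d) :
    countPref (cyclicProfile m) c d = m - (d - c).val := by
  rw [cyclicProfile, countPref_map_finRange,
    ← card_filter_val_lt_val_add (sub_ne_zero.mpr hcd.symm)]
  refine card_equiv (Equiv.subLeft c) fun j => ?_
  simp [cyclicVote, Vote.ofInjective]

lemma card_filter_erase_sub_val_le (c : Fin m) {k : ℕ} (hk : k < m) :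
    #{d ∈ univ.erase c | (d - c).val ≤ k} = k := by
  have hshift : #{d ∈ univ.erase c | (d - c).val ≤ k} =
      #((univ.filter fun t : Fin m => t.val < k + 1).erase 0) :=
    card_equiv (Equiv.subRight c) fun d => by simp [sub_eq_zero, and_comm]
  rw [hshift, card_erase_of_mem (by simp), Fin.card_filter_val_lt]
  omega

end Cyclic

lemma points_cyclicProfile {n : ℕ} (α : ℚ) {c d : Fin (2 * n + 1)} (hcd : c ≠ d) :
    points α (cyclicProfile (2 * n + 1)) c d = if (d - c).val ≤ n then 1 else 0 := by
  have hpos : (d - c).val ≠ 0 := Fin.val_ne_iff.mpr (sub_ne_zero.mpr hcd.symm)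
  have hlt := (d - c).isLt
  have hodd : Odd (cyclicProfile (2 * n + 1)).length := by
    rw [length_cyclicProfile]; exact odd_two_mul_add_one n
  rw [points_eq_ite_of_odd α _ hcd hodd, countPref_cyclicProfile hcd, length_cyclicProfile]
  exact if_congr (by omega) rfl rfl

theorem pad_election_exists_general (n : ℕ) (α : ℚ) :
    ∃ V : List (Vote (Fin (2 * n + 1))),
      ∀ c : Fin (2 * n + 1), score α Finset.univ V c = (n : ℚ) := by
  refine ⟨cyclicProfile (2 * n + 1), fun c => ?_⟩
  rw [score, sum_congr rfl fun d hd => points_cyclicProfile α (ne_of_mem_erase hd).symm,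
    sum_boole, card_filter_erase_sub_val_le c (by omega)]

/-- for each positive `n` and rational `α ∈ [0,1]`, there is an election
with exactly `2n+1` candidates in which every candidate has Copeland^α score exactly `n`. -/
theorem pad_election_exists (n : ℕ) (hn : 0 < n) (α : ℚ) (h0 : 0 ≤ α) (h1 : α ≤ 1) :
    ∃ V : List (Vote (Fin (2 * n + 1))),
      ∀ c : Fin (2 * n + 1), score α Finset.univ V c = (n : ℚ) :=
  pad_election_exists_general n α
end

section
/- McGarvey-type realizability: for every finite set C of candidates and every function f assigning to each unordered pair {c,d} ⊆ C one of the outcomes 'c beats d', 'd beats c', or 'tie', there exists a finite list V of strict linear orders over C such that for every pair {c,d}, the head-to-head majority contest in the election (C,V) has outcome f({c,d}). -/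
/-! For an ordered pair `(c, d)`, the two voters `c ≻ d ≻ x₁ ≻ ⋯ ≻ xₙ` and `xₙ ≻ ⋯ ≻ x₁ ≻ c ≻ d`
agree only on `c ≻ d` and cancel on every other pair, so they shift the majority margin of `(c, d)`
by `2` and leave all other margins unchanged. Summing one such block for every pair that `f` wants
`c` to win realizes the margin `2 · sign (f c d)` on each pair. -/

namespace Vote

variable {C : Type}

def ofInjective_s4 {α : Type*} [LinearOrder α] (r : C → α) (hr : Function.Injective r) : Vote C where
  pref a b := decide (r a < r b)
  asymm a b hab := by
    rcases (hr.ne hab).lt_or_gt with h | h <;> simp [h, h.not_gt]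
  irrefl a := by simp
  trans a b c := by simpa only [decide_eq_true_eq] using lt_trans

end Vote

section Margin

variable {C : Type}

def margin (V : List (Vote C)) (a b : C) : ℤ :=
  countPref V a b - countPref V b a

lemma margin_flatMap {β : Type} (L : List β) (g : β → List (Vote C)) (a b : C) :
    margin (L.flatMap g) a b = (L.map fun x => margin (g x) a b).sum := by
  induction L with
  | nil => simp [margin, countPref]
  | cons x xs ih =>
    simp only [List.flatMap_cons, List.map_cons, List.sum_cons, ← ih]
    simp only [margin, countPref, List.countP_append]
    push_cast
    ring

end Margin

namespace McGarvey

variable {C : Type} [DecidableEq C] {e : C → ℕ}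

def leadingRank (e : C → ℕ) (c d a : C) : ℤ :=
  if a = c then -2 else if a = d then -1 else e a

def trailingRank (e : C → ℕ) (c d a : C) : ℤ :=
  if a = c then 1 else if a = d then 2 else -e a

lemma leadingRank_injective (he : Function.Injective e) (c d : C) :
    Function.Injective (leadingRank e c d) := by
  intro a b h
  simp only [leadingRank] at h
  split_ifs at h <;> first | omega | (subst_vars; rfl) | exact he (by omega)

lemma trailingRank_injective (he : Function.Injective e) (c d : C) :
    Function.Injective (trailingRank e c d) := by
  intro a b h
  simp only [trailingRank] at h
  split_ifs at h <;> first | omega | (subst_vars; rfl) | exact he (by omega)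

def block (he : Function.Injective e) (c d : C) : List (Vote C) :=
  [Vote.ofInjective_s4 _ (leadingRank_injective he c d),
    Vote.ofInjective_s4 _ (trailingRank_injective he c d)]

lemma margin_block (he : Function.Injective e) (c d : C) {a b : C} (hab : a ≠ b) :
    margin (block he c d) a b =
      (if (a, b) = (c, d) then 2 else 0) - (if (b, a) = (c, d) then 2 else 0) := by
  have hne : e a ≠ e b := he.ne hab
  simp only [margin, countPref, block, Vote.ofInjective_s4, leadingRank, trailingRank,
    List.countP_cons, List.countP_nil, Prod.mk.injEq]
  split_ifs <;> simp_all <;> omega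

noncomputable def profile (he : Function.Injective e) (S : Finset (C × C)) : List (Vote C) :=
  S.toList.flatMap fun p => block he p.1 p.2

lemma margin_profile (he : Function.Injective e) (S : Finset (C × C)) {a b : C} (hab : a ≠ b) :
    margin (profile he S) a b =
      (if (a, b) ∈ S then 2 else 0) - (if (b, a) ∈ S then 2 else 0) := by
  rw [profile, margin_flatMap, Finset.sum_map_toList]
  simp only [margin_block he _ _ hab, Finset.sum_sub_distrib, Finset.sum_ite_eq]

end McGarvey

/-- McGarvey-type realizability: any desired pattern of pairwise majority
outcomes, encoded by a skew-symmetric sign function `f` (`f c d > 0`: `c` is to beat `d`;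
`f c d = 0`: `c` and `d` are to tie), is realizable by a finite list of strict linear orders. -/
theorem mcgarvey_realizability {C : Type} [Fintype C] [DecidableEq C]
    (f : C → C → ℤ) (hskew : ∀ c d : C, f c d = -f d c) :
    ∃ V : List (Vote C), ∀ c d : C, c ≠ d →
      (0 < f c d → countPref V d c < countPref V c d) ∧
      (f c d = 0 → countPref V c d = countPref V d c) ∧
      (f c d < 0 → countPref V c d < countPref V d c) := by
  have he : Function.Injective fun c => (Fintype.equivFin C c : ℕ) :=
    Fin.val_injective.comp (Fintype.equivFin C).injective
  refine ⟨McGarvey.profile he {p | 0 < f p.1 p.2}, fun c d hcd => ?_⟩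
  have hmargin := McGarvey.margin_profile he {p | 0 < f p.1 p.2} hcd
  simp only [Finset.mem_filter, Finset.mem_univ, true_and, hskew d c, Left.neg_pos_iff,
    margin] at hmargin
  refine ⟨fun h₁ => ?_, fun h₀ => ?_, fun h₂ => ?_⟩ <;> split_ifs at hmargin <;> omega
end

section
/- Let E = (C,V) be an election with C = {c_1,...,c_n}, let α ∈ [0,1] be rational, let t_i be the number of head-to-head ties of c_i in E, and let k_1,...,k_n be integers with 0 ≤ k_i ≤ n. Then there exists an election E' = (C ∪ D, V') with D = {d_1,...,d_{2n²}} disjoint from C such that for each i, the Copeland^α score of c_i in E' is 2n² − k_i + α·t_i, and for each j, the Copeland^α score of d_j in E' is at most n² + 1. -/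
/-- Number of head-to-head ties of candidate `c` in the election on all of `C`. -/
def tiesCount {C : Type} [Fintype C] [DecidableEq C] (V : List (Vote C)) (c : C) : ℕ :=
  ((Finset.univ.erase c).filter fun d => countPref V c d = countPref V d c).card

/-!
By McGarvey's theorem it suffices to prescribe an asymmetric majority relation on `C ⊕ D`.
Keep the relation of `E` on `C`; let `c_i` lose to a block of `k_i + w_i` padding candidates
(`w_i` its number of wins in `E`) and beat all others. The blocks have size at most `2n` and so
fit disjointly into `|D| = 2n²`. Arrange `D` in a circle where each `d_j` beats the next `n² - 1`
candidates. Then `c_i` scores `w_i + α t_i + 2n² - (k_i + w_i)`, while `d_j` avoids defeat only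
against `n²` other padding candidates and at most one `c_i`, so its score is at most `n² + 1`.
-/

open Finset

section Points

variable {C : Type}

def majorityRel (V : List (Vote C)) (x y : C) : Prop :=
  countPref V y x < countPref V x y

variable (α : ℚ) {V : List (Vote C)} {x y : C}

theorem points_self (V : List (Vote C)) (c : C) : points α V c c = α := by
  simp [points]

theorem points_of_majorityRel (h : majorityRel V x y) : points α V x y = 1 :=
  if_pos h

theorem points_of_majorityRel_swap (h : majorityRel V y x) : points α V x y = 0 := by
  unfold majorityRel at h
  simp only [points]
  rw [if_neg (by omega), if_neg (by omega)]

theorem points_le_one {α : ℚ} (hα : α ≤ 1) (V : List (Vote C)) (x y : C) :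
    points α V x y ≤ 1 := by
  unfold points
  split_ifs <;> linarith

theorem points_congr {D : Type} {W : List (Vote D)} {x' y' : D}
    (hxy : majorityRel W x' y' ↔ majorityRel V x y)
    (hyx : majorityRel W y' x' ↔ majorityRel V y x) :
    points α W x' y' = points α V x y := by
  unfold majorityRel at hxy hyx
  unfold points
  split_ifs <;> first | rfl | (exfalso; omega)

end Points

section McGarvey

variable {C : Type} [Fintype C] [DecidableEq C]

def Vote.ofKey (key : C → ℕ) (hkey : Function.Injective key) : Vote C where
  pref a b := decide (key a < key b)
  asymm a b hab := by
    have := hkey.ne hab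
    by_cases h : key a < key b <;> simp [h] <;> omega
  irrefl a := by simp
  trans a b c := by simp only [decide_eq_true_eq]; omega

noncomputable def pairKeyFst (a b x : C) : ℕ :=
  if x = a then 0 else if x = b then 1 else Fintype.equivFin C x + 2

noncomputable def pairKeySnd (a b x : C) : ℕ :=
  if x = a then Fintype.card C else if x = b then Fintype.card C + 1
  else Fintype.card C - 1 - Fintype.equivFin C x

theorem pairKeyFst_injective (a b : C) : Function.Injective (pairKeyFst a b) := by
  intro x y h
  have hx := (Fintype.equivFin C x).isLt
  have hy := (Fintype.equivFin C y).isLt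
  unfold pairKeyFst at h
  split_ifs at h <;> first
    | omega
    | (subst_vars; rfl)
    | exact (Fintype.equivFin C).injective (Fin.val_injective (by omega))

theorem pairKeySnd_injective (a b : C) : Function.Injective (pairKeySnd a b) := by
  intro x y h
  have hx := (Fintype.equivFin C x).isLt
  have hy := (Fintype.equivFin C y).isLt
  unfold pairKeySnd at h
  split_ifs at h <;> first
    | omega
    | (subst_vars; rfl)
    | exact (Fintype.equivFin C).injective (Fin.val_injective (by omega))

/-- The votes `a ≻ b ≻ rest` and `reversed rest ≻ a ≻ b` cancel on every pair except `(a, b)`,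
which `a` wins twice. -/
noncomputable def pairVotes (a b : C) : List (Vote C) :=
  [Vote.ofKey _ (pairKeyFst_injective a b), Vote.ofKey _ (pairKeySnd_injective a b)]

theorem countPref_pairVotes {a b x y : C} (hab : a ≠ b) (hxy : x ≠ y) :
    countPref (pairVotes a b) x y =
      if x = a ∧ y = b then 2 else if x = b ∧ y = a then 0 else 1 := by
  have hexy : (Fintype.equivFin C x : ℕ) ≠ Fintype.equivFin C y :=
    fun h => hxy ((Fintype.equivFin C).injective (Fin.val_injective h))
  have hbound := fun z => (Fintype.equivFin C z).isLt
  have := hbound a; have := hbound b; have := hbound x; have := hbound y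
  simp only [countPref, pairVotes, Vote.ofKey, pairKeyFst, pairKeySnd, List.countP_cons,
    List.countP_nil]
  by_cases hxa : x = a <;> by_cases hya : y = a <;> by_cases hxb : x = b <;>
    by_cases hyb : y = b <;> simp_all [-Fin.val_fin_lt, -Fin.is_lt] <;> (try split_ifs) <;> omega

open Classical in
noncomputable def mcgarveyVotes (w : C → C → Prop) : List (Vote C) :=
  {p : C × C | w p.1 p.2}.toFinset.toList.flatMap fun p => pairVotes p.1 p.2

open Classical in
theorem countPref_mcgarveyVotes (w : C → C → Prop) (x y : C) :
    countPref (mcgarveyVotes w) x y =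
      ∑ p ∈ {p : C × C | w p.1 p.2}.toFinset, countPref (pairVotes p.1 p.2) x y := by
  rw [mcgarveyVotes, countPref, List.countP_flatMap, ← Finset.sum_map_toList]
  rfl

open Classical in
theorem countPref_sub_countPref_mcgarveyVotes {w : C → C → Prop}
    (hw : ∀ a b, w a b → ¬ w b a) {x y : C} (hxy : x ≠ y) :
    (countPref (mcgarveyVotes w) x y : ℤ) - countPref (mcgarveyVotes w) y x =
      (if w x y then 2 else 0) - (if w y x then 2 else 0) := by
  have hpair : ∀ p ∈ {p : C × C | w p.1 p.2}.toFinset,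
      (countPref (pairVotes p.1 p.2) x y : ℤ) - countPref (pairVotes p.1 p.2) y x =
        (if p = (x, y) then 2 else 0) - (if p = (y, x) then 2 else 0) := by
    rintro ⟨a, b⟩ hp
    have hab : a ≠ b := by
      rintro rfl
      simp only [Set.mem_toFinset, Set.mem_ofPred_eq] at hp
      exact hw a a hp hp
    rw [countPref_pairVotes hab hxy, countPref_pairVotes hab hxy.symm]
    simp only [Prod.mk.injEq]
    split_ifs <;> first | rfl | (exfalso; grind)
  rw [countPref_mcgarveyVotes, countPref_mcgarveyVotes]
  push_cast
  rw [← Finset.sum_sub_distrib, Finset.sum_congr rfl hpair, Finset.sum_sub_distrib,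
    Finset.sum_ite_eq', Finset.sum_ite_eq']
  simp

/-- McGarvey's theorem. -/
theorem exists_majorityRel_eq (w : C → C → Prop) (hw : ∀ a b, w a b → ¬ w b a) :
    ∃ V : List (Vote C), majorityRel V = w := by
  classical
  refine ⟨mcgarveyVotes w, funext fun x => funext fun y => propext ?_⟩
  rcases eq_or_ne x y with rfl | hxy
  · exact ⟨fun h => absurd h (lt_irrefl _), fun h => absurd h (hw x x h)⟩
  have h := countPref_sub_countPref_mcgarveyVotes hw hxy
  unfold majorityRel
  by_cases hxy' : w x y
  · simp only [if_pos hxy', if_neg (hw x y hxy')] at h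
    exact iff_of_true (by omega) hxy'
  · by_cases hyx : w y x <;> simp only [if_neg hxy', hyx, if_true, if_false] at h <;>
      exact iff_of_false (by omega) hxy'

end McGarvey

theorem exists_fiber_card_eq {ι D : Type} [Fintype ι] [DecidableEq ι] [Fintype D]
    (len : ι → ℕ) (hlen : ∑ i, len i ≤ Fintype.card D) :
    ∃ o : D → Option ι, ∀ i, #{j | o j = some i} = len i := by
  obtain ⟨e⟩ := Function.Embedding.nonempty_of_card_le (α := Σ i, Fin (len i)) (β := D)
    (by simpa using hlen)
  refine ⟨Function.extend e (fun p => some p.1) fun _ => none, fun i => ?_⟩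
  have hfiber : ({j | Function.extend e (fun p => some p.1) (fun _ => none) j = some i} :
      Finset D) = univ.map ⟨fun r : Fin (len i) => e ⟨i, r⟩, fun r s h => by simpa using h⟩ := by
    ext j
    simp only [mem_filter, mem_univ, true_and, mem_map]
    by_cases hj : ∃ p, e p = j
    · obtain ⟨⟨i', r⟩, rfl⟩ := hj
      rw [e.injective.extend_apply]
      constructor
      · rintro ⟨⟩
        exact ⟨r, rfl⟩
      · rintro ⟨s, hs⟩
        cases e.injective hs
        rfl
    · rw [Function.extend_apply' _ _ _ hj]
      exact ⟨nofun, fun ⟨r, hr⟩ => (hj ⟨_, hr⟩).elim⟩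
  simp [hfiber]

/-- `l - j` is taken mod `2 * m`: around the circle, `j` beats the next `m - 1` candidates
and ties with the opposite one. -/
def cyclicBeats (m : ℕ) (j l : Fin (2 * m)) : Prop :=
  0 < (l - j : Fin (2 * m)).val ∧ (l - j : Fin (2 * m)).val < m

instance (m : ℕ) : DecidableRel (cyclicBeats m) := fun _ _ =>
  inferInstanceAs (Decidable (_ ∧ _))

theorem cyclicBeats_asymm {m : ℕ} {j l : Fin (2 * m)} (h : cyclicBeats m j l) :
    ¬ cyclicBeats m l j := by
  have : NeZero (2 * m) := ⟨j.pos.ne'⟩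
  have hne : l - j ≠ 0 := fun h0 => by simp [cyclicBeats, h0] at h
  have hval : ((j - l : Fin (2 * m)) : ℕ) = 2 * m - (l - j : Fin (2 * m)) := by
    rw [← neg_sub, Fin.val_neg, if_neg hne]
  unfold cyclicBeats at h ⊢
  omega

theorem card_filter_not_cyclicBeats_le (m : ℕ) (j : Fin (2 * m)) :
    #{l | ¬ cyclicBeats m l j} ≤ m + 1 := by
  have : NeZero (2 * m) := ⟨j.pos.ne'⟩
  have hmaps : ∀ l ∈ ({l | ¬ cyclicBeats m l j} : Finset _),
      (j - l : Fin (2 * m)).val ∈ insert 0 (Ico m (2 * m)) := by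
    intro l hl
    have := (j - l).isLt
    simp only [mem_filter, mem_univ, true_and, cyclicBeats, not_and, not_lt] at hl
    simp only [mem_insert, mem_Ico]
    omega
  calc #{l | ¬ cyclicBeats m l j}
      ≤ #(insert 0 (Ico m (2 * m))) :=
        card_le_card_of_injOn _ hmaps fun l _ l' _ h => sub_right_injective (Fin.val_injective h)
    _ ≤ m + 1 := by
        refine (card_insert_le _ _).trans ?_
        simp only [Nat.card_Ico]
        omega

section Padding

variable {ι : Type} [Fintype ι] [DecidableEq ι]

def winsCount (V : List (Vote ι)) (c : ι) : ℕ :=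
  #{d ∈ univ.erase c | countPref V d c < countPref V c d}

theorem score_univ_eq (α : ℚ) (V : List (Vote ι)) (c : ι) :
    score α univ V c = winsCount V c + α * tiesCount V c := by
  have hpoints : ∀ d, points α V c d =
      (if countPref V d c < countPref V c d then 1 else 0) +
        α * (if countPref V c d = countPref V d c then 1 else 0) := by
    intro d
    unfold points
    split_ifs <;> first | ring1 | (exfalso; omega)
  simp only [score, hpoints, sum_add_distrib, ← mul_sum, sum_boole, winsCount, tiesCount]

theorem score_univ_eq_sum_sub (α : ℚ) (V : List (Vote ι)) (c : ι) :
    score α univ V c = ∑ d, points α V c d - α := by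
  rw [score, sum_erase_eq_sub (mem_univ c), points_self]

theorem winsCount_le (V : List (Vote ι)) (c : ι) : winsCount V c ≤ Fintype.card ι :=
  (card_filter_le _ _).trans (card_erase_le.trans_eq card_univ)

variable {m : ℕ}

/-- `o j = some i` places the padding candidate `j` in the block of candidates beating `i`. -/
def paddedBeats (V : List (Vote ι)) (o : Fin (2 * m) → Option ι) :
    ι ⊕ Fin (2 * m) → ι ⊕ Fin (2 * m) → Prop
  | .inl i, .inl i' => majorityRel V i i'
  | .inl i, .inr j => o j ≠ some i
  | .inr j, .inl i => o j = some i
  | .inr j, .inr l => cyclicBeats m j l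

instance (V : List (Vote ι)) (o : Fin (2 * m) → Option ι) : DecidableRel (paddedBeats V o)
  | .inl _, .inl _ => inferInstanceAs (Decidable (_ < _))
  | .inl _, .inr _ => inferInstanceAs (Decidable (_ ≠ _))
  | .inr _, .inl _ => inferInstanceAs (Decidable (_ = _))
  | .inr _, .inr _ => inferInstanceAs (Decidable (cyclicBeats _ _ _))

omit [Fintype ι] [DecidableEq ι] in
theorem paddedBeats_asymm (V : List (Vote ι)) (o : Fin (2 * m) → Option ι) :
    ∀ x y, paddedBeats V o x y → ¬ paddedBeats V o y x
  | .inl _, .inl _ => by simp only [paddedBeats, majorityRel]; omega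
  | .inl _, .inr _ => by simp only [paddedBeats]; tauto
  | .inr _, .inl _ => by simp only [paddedBeats]; tauto
  | .inr _, .inr _ => cyclicBeats_asymm

theorem card_filter_not_paddedBeats_inr_le (V : List (Vote ι)) (o : Fin (2 * m) → Option ι)
    (j : Fin (2 * m)) : #{x | ¬ paddedBeats V o x (.inr j)} ≤ m + 2 := by
  have howner : #{i | ¬ paddedBeats V o (.inl i) (.inr j)} ≤ 1 :=
    card_le_one.mpr fun a ha b hb => by simp_all [paddedBeats]
  have hsplit : #{x | ¬ paddedBeats V o x (.inr j)} =
      #{i | ¬ paddedBeats V o (.inl i) (.inr j)} + #{l | ¬ cyclicBeats m l j} := by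
    rw [card_filter, Fintype.sum_sum_type, ← card_filter, ← card_filter]
    rfl
  have := card_filter_not_cyclicBeats_le m j
  omega

variable {α : ℚ} {V : List (Vote ι)} {o : Fin (2 * m) → Option ι}
  {V' : List (Vote (ι ⊕ Fin (2 * m)))}

theorem score_inl_eq (hV' : majorityRel V' = paddedBeats V o) (i : ι) :
    score α univ V' (.inl i) = score α univ V i + 2 * m - #{j | o j = some i} := by
  have horig : ∀ i', points α V' (.inl i) (.inl i') = points α V i i' := fun i' =>
    points_congr α (by rw [hV']; rfl) (by rw [hV']; rfl)
  have hpad : ∀ j, points α V' (.inl i) (.inr j) = 1 - if o j = some i then 1 else 0 := by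
    intro j
    by_cases h : o j = some i
    · rw [points_of_majorityRel_swap α (by rw [hV']; exact h), if_pos h, sub_self]
    · rw [points_of_majorityRel α (by rw [hV']; exact h), if_neg h, sub_zero]
  rw [score_univ_eq_sum_sub, Fintype.sum_sum_type, score_univ_eq_sum_sub]
  simp only [horig, hpad, sum_sub_distrib, sum_boole, sum_const, card_univ, Fintype.card_fin,
    nsmul_eq_mul, Nat.cast_mul, Nat.cast_ofNat, mul_one]
  ring

theorem score_inr_le (hα : α ≤ 1) (hV' : majorityRel V' = paddedBeats V o) (j : Fin (2 * m)) :
    score α univ V' (.inr j) ≤ m + 1 := by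
  have hle : ∀ x ∈ univ.erase (.inr j),
      points α V' (.inr j) x ≤ if paddedBeats V o x (.inr j) then 0 else 1 := by
    intro x _
    split_ifs with h
    · exact (points_of_majorityRel_swap α (by rw [hV']; exact h)).le
    · exact points_le_one hα V' _ _
  have hirr : ¬ paddedBeats V o (.inr j) (.inr j) := fun h => paddedBeats_asymm V o _ _ h h
  have hcount : ∑ x, (if paddedBeats V o x (.inr j) then (0 : ℚ) else 1) =
      #{x | ¬ paddedBeats V o x (.inr j)} := by
    rw [← sum_boole]
    exact sum_congr rfl fun x _ => (ite_not _ _ _).symm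
  have hcard : (#{x | ¬ paddedBeats V o x (.inr j)} : ℚ) ≤ m + 2 := by
    exact_mod_cast card_filter_not_paddedBeats_inr_le V o j
  calc score α univ V' (.inr j)
      ≤ ∑ x ∈ univ.erase (.inr j), if paddedBeats V o x (.inr j) then (0 : ℚ) else 1 :=
        sum_le_sum hle
    _ = #{x | ¬ paddedBeats V o x (.inr j)} - 1 := by
        rw [sum_erase_eq_sub (mem_univ _), hcount, if_neg hirr]
    _ ≤ m + 1 := by linarith

end Padding

theorem construction_lemma_general (n : ℕ) (α : ℚ) (h1 : α ≤ 1)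
    (V : List (Vote (Fin n))) (k : Fin n → ℕ) (hk : ∀ i, k i ≤ n) :
    ∃ V' : List (Vote (Fin n ⊕ Fin (2 * n ^ 2))),
      (∀ i : Fin n,
        score α Finset.univ V' (Sum.inl i)
          = 2 * (n : ℚ) ^ 2 - (k i : ℚ) + α * (tiesCount V i : ℚ)) ∧
      (∀ j : Fin (2 * n ^ 2),
        score α Finset.univ V' (Sum.inr j) ≤ (n : ℚ) ^ 2 + 1) := by
  have hlen : ∑ i, (k i + winsCount V i) ≤ Fintype.card (Fin (2 * n ^ 2)) :=
    calc ∑ i, (k i + winsCount V i)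
        ≤ ∑ _i : Fin n, 2 * n := sum_le_sum fun i _ => by
          have := winsCount_le V i
          rw [Fintype.card_fin] at this
          linarith [hk i]
      _ = Fintype.card (Fin (2 * n ^ 2)) := by
          rw [sum_const, card_univ, Fintype.card_fin, Fintype.card_fin, smul_eq_mul]
          ring
  obtain ⟨o, ho⟩ := exists_fiber_card_eq _ hlen
  obtain ⟨V', hV'⟩ := exists_majorityRel_eq _ (paddedBeats_asymm V o)
  refine ⟨V', fun i => ?_, fun j => ?_⟩
  · rw [score_inl_eq hV', ho, score_univ_eq]
    push_cast
    ring
  · exact_mod_cast score_inr_le h1 hV' j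

/-- construction lemma: given an election `E` on `n` candidates with tie counts
`t_i`, and integers `0 ≤ k_i ≤ n`, there is an election on the `n` original candidates plus
`2n²` padding candidates in which candidate `c_i` has Copeland^α score `2n² − k_i + α·t_i`
and every padding candidate has score at most `n² + 1`. -/
theorem construction_lemma (n : ℕ) (α : ℚ) (h0 : 0 ≤ α) (h1 : α ≤ 1)
    (V : List (Vote (Fin n))) (k : Fin n → ℕ) (hk : ∀ i, k i ≤ n) :
    ∃ V' : List (Vote (Fin n ⊕ Fin (2 * n ^ 2))),
      (∀ i : Fin n,
        score α Finset.univ V' (Sum.inl i)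
          = 2 * (n : ℚ) ^ 2 - (k i : ℚ) + α * (tiesCount V i : ℚ)) ∧
      (∀ j : Fin (2 * n ^ 2),
        score α Finset.univ V' (Sum.inr j) ≤ (n : ℚ) ^ 2 + 1) :=
  construction_lemma_general n α h1 V k hk
end

section
/- In a Copeland election restricted to a subcommittee S containing p, at least two distinct candidates h, h' from H (where every member of H defeats every member of F head-to-head, p ∈ F, and h,h' do not tie each other), candidate p is not a winner of the subelection (S,V): whichever of h,h' wins their head-to-head contest has Copeland^α score strictly greater than p's score in S. -/
/-!
`p` can only score against members of `F ∩ S` other than itself and against `r`, so its score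
is at most `|F ∩ S|`. The winner of the contest between `h` and `h'` collects a full point
against every member of `F ∩ S` and one more against the loser, so its score is at least
`|F ∩ S| + 1`.
-/

open Finset

section Copeland

variable {C : Type} {α : ℚ} {V : List (Vote C)} {c d : C}

lemma points_nonneg (h0 : 0 ≤ α) : 0 ≤ points α V c d := by
  unfold points; split_ifs <;> norm_num [h0]

lemma points_le_one_s11 (h1 : α ≤ 1) : points α V c d ≤ 1 := by
  unfold points; split_ifs <;> norm_num [h1]

variable [DecidableEq C] {S T : Finset C}

lemma score_le_card (h1 : α ≤ 1) (hT : ∀ d ∈ S.erase c, d ∉ T → points α V c d = 0) :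
    score α S V c ≤ #T := calc
  score α S V c = ∑ d ∈ (S.erase c).filter (· ∈ T), points α V c d :=
    (sum_filter_of_ne fun d hd hne => by_contra fun hdT => hne (hT d hd hdT)).symm
  _ ≤ #((S.erase c).filter (· ∈ T)) • (1 : ℚ) :=
    sum_le_card_nsmul _ _ _ fun _ _ => points_le_one_s11 h1
  _ ≤ #T := by
    rw [nsmul_one]
    exact_mod_cast card_le_card fun d hd => (mem_filter.mp hd).2

lemma card_le_score (h0 : 0 ≤ α) (hT : T ⊆ S.erase c)
    (hwin : ∀ d ∈ T, points α V c d = 1) :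
    (#T : ℚ) ≤ score α S V c := calc
  (#T : ℚ) = ∑ d ∈ T, points α V c d := by simp [sum_congr rfl hwin]
  _ ≤ score α S V c := sum_le_sum_of_subset_of_nonneg hT fun _ _ _ => points_nonneg h0

lemma not_isWinner_of_score_lt {p : C} (hc : c ∈ S) (hlt : score α S V p < score α S V c) :
    ¬ IsWinner α S V p :=
  fun ⟨_, hmax⟩ => (hmax c hc).not_gt hlt

lemma score_lt_score_of_beats {F H : Finset C} {r p g g' : C} (h0 : 0 ≤ α) (h1 : α ≤ 1)
    (hS : S ⊆ F ∪ H ∪ {r}) (hpF : p ∈ F) (hpS : p ∈ S)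
    (hgH : g ∈ H) (hg'H : g' ∈ H) (hgS : g ∈ S) (hg'S : g' ∈ S) (hne : g ≠ g')
    (hbeat : ∀ g ∈ S ∩ H, ∀ d ∈ S ∩ F, points α V g d = 1 ∧ points α V d g = 0)
    (hwin : points α V g g' = 1) :
    score α S V p < score α S V g := by
  -- nobody beats itself, so `S ∩ H` and `S ∩ F` are disjoint
  have hHF : ∀ x ∈ S ∩ H, x ∉ S ∩ F := fun x hxH hxF =>
    one_ne_zero ((hbeat x hxH x hxF).1.symm.trans (hbeat x hxH x hxF).2)
  have hpSF : p ∈ S ∩ F := mem_inter.2 ⟨hpS, hpF⟩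
  have hgSH : g ∈ S ∩ H := mem_inter.2 ⟨hgS, hgH⟩
  have hp : score α S V p ≤ #(S ∩ F) := calc
    score α S V p ≤ #(insert r ((S ∩ F).erase p)) := by
      refine score_le_card h1 fun d hd hdT =>
        (hbeat d (mem_inter.2 ⟨mem_of_mem_erase hd, ?_⟩) p hpSF).2
      have hdS := hS (mem_of_mem_erase hd)
      simp only [mem_insert, mem_erase, mem_inter, mem_union, mem_singleton] at hd hdT hdS
      tauto
    _ ≤ #(S ∩ F) := by exact_mod_cast (card_insert_le _ _).trans (card_erase_add_one hpSF).le
  have hg : #(S ∩ F) + 1 ≤ score α S V g := calc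
    (#(S ∩ F) + 1 : ℚ) = #(insert g' (S ∩ F)) := by
      rw [card_insert_of_notMem (hHF g' (mem_inter.2 ⟨hg'S, hg'H⟩))]; push_cast; rfl
    _ ≤ score α S V g := by
      refine card_le_score h0 (insert_subset (mem_erase.2 ⟨hne.symm, hg'S⟩) fun d hd => ?_)
        (forall_mem_insert _ _ _ |>.2 ⟨hwin, fun d hd => (hbeat g hgSH d hd).1⟩)
      exact mem_erase.2 ⟨fun hdg => hHF g hgSH (hdg ▸ hd), (mem_inter.1 hd).1⟩
  linarith

end Copeland

theorem two_H_members_block_p_general {C : Type} [DecidableEq C]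
    (α : ℚ) (h0 : 0 ≤ α) (h1 : α ≤ 1)
    (S F H : Finset C) (r p h h' : C) (V : List (Vote C))
    (hS : S ⊆ F ∪ H ∪ {r})
    (hpF : p ∈ F) (hpS : p ∈ S)
    (hhH : h ∈ H) (hh'H : h' ∈ H) (hhS : h ∈ S) (hh'S : h' ∈ S) (hne : h ≠ h')
    (hbeat : ∀ g ∈ S ∩ H, ∀ d ∈ S ∩ F, points α V g d = 1 ∧ points α V d g = 0)
    (hnotie : points α V h h' = 1 ∨ points α V h' h = 1) :
    (points α V h h' = 1 → score α S V p < score α S V h) ∧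
    (points α V h' h = 1 → score α S V p < score α S V h') ∧
    ¬ IsWinner α S V p := by
  have hwins : ∀ {g g'}, g ∈ H → g' ∈ H → g ∈ S → g' ∈ S → g ≠ g' →
      points α V g g' = 1 → score α S V p < score α S V g :=
    fun hgH hg'H hgS hg'S hne =>
      score_lt_score_of_beats h0 h1 hS hpF hpS hgH hg'H hgS hg'S hne hbeat
  refine ⟨hwins hhH hh'H hhS hh'S hne, hwins hh'H hhH hh'S hhS hne.symm, ?_⟩
  rcases hnotie with hwin | hwin
  · exact not_isWinner_of_score_lt hhS (hwins hhH hh'H hhS hh'S hne hwin)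
  · exact not_isWinner_of_score_lt hh'S (hwins hh'H hhH hh'S hhS hne.symm hwin)

/-- in a subelection on candidate set `S ⊆ F ∪ H ∪ {r}` containing `p ∈ F` and
two distinct non-tying members `h, h'` of `H`, where every member of `H ∩ S` defeats every
member of `F ∩ S`, whichever of `h, h'` wins their head-to-head contest has Copeland^α score
strictly greater than `p`'s score in `S`; hence `p` is not a winner of `(S, V)`. -/
theorem two_H_members_block_p {C : Type} [DecidableEq C]
    (α : ℚ) (h0 : 0 ≤ α) (h1 : α ≤ 1)
    (S F H : Finset C) (r p h h' : C) (V : List (Vote C))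
    (hS : S ⊆ F ∪ H ∪ {r})
    (hpF : p ∈ F) (hpS : p ∈ S)
    (hhH : h ∈ H) (hh'H : h' ∈ H) (hhS : h ∈ S) (hh'S : h' ∈ S) (hne : h ≠ h')
    (hFH : Disjoint F H) (hrF : r ∉ F) (hrH : r ∉ H)
    (hbeat : ∀ g ∈ S ∩ H, ∀ d ∈ S ∩ F, points α V g d = 1 ∧ points α V d g = 0)
    (hnotie : points α V h h' = 1 ∨ points α V h' h = 1) :
    (points α V h h' = 1 → score α S V p < score α S V h) ∧
    (points α V h' h = 1 → score α S V p < score α S V h') ∧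
    ¬ IsWinner α S V p :=
  two_H_members_block_p_general α h0 h1 S F H r p h h' V hS hpF hpS hhH hh'H hhS hh'S hne hbeat
    hnotie
end
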